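/- arXiv:0705.3767 — 5 statements merged into one kernel-verified Lean document; each statement's English description precedes it below -/
import Mathlib

section
/- Let I and J be (x,y)-primary monomial ideals of K[x,y] with associated sequences a = (a_0, ..., a_d) and a' = (a'_0, ..., a'_e) respectively (where a_i = min{ j : x^{d-i} y^j ∈ I } and similarly for a'). Then the sequence associated to the product ideal IJ (with respect to degree d+e) is c = (c_0, ..., c_{d+e}) where c_i = min{ a_j + a'_k : j + k = i, 0 ≤ j ≤ d, 0 ≤ k ≤ e }. -/
/-!
The product IJ is generated by the monomials x^(d-v+e-u) y^(a_v+a'_u), and a monomial lies in a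
monomial ideal iff some generator divides it. Hence the exponents j with x^(d+e-i) y^j ∈ IJ form
the upper closure of {a_v + a'_u : v + u ≥ i}. Since a and a' are monotone, lowering (v, u) onto
the antidiagonal v + u = i does not increase a_v + a'_u, so that upper closure is also the one of
{a_v + a'_u : v + u = i}, and both sets have the same minimum.
-/

open MvPolynomial

theorem Nat.sInf_upperClosure (s : Set ℕ) : sInf (upperClosure s : Set ℕ) = sInf s := by
  rcases s.eq_empty_or_nonempty with rfl | hs
  · simp
  refine le_antisymm (Nat.sInf_le (subset_upperClosure (Nat.sInf_mem hs))) ?_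
  obtain ⟨a, ha, hle⟩ := mem_upperClosure.mp (Nat.sInf_mem (hs.mono subset_upperClosure))
  exact (Nat.sInf_le ha).trans hle

theorem Finsupp.single_zero_add_single_one_le_iff {p q p' q' : ℕ} :
    (Finsupp.single 0 p + Finsupp.single 1 q : Fin 2 →₀ ℕ) ≤
        Finsupp.single 0 p' + Finsupp.single 1 q' ↔ p ≤ p' ∧ q ≤ q' := by
  simp [Finsupp.le_def, Fin.forall_fin_two]

namespace MvPolynomial

variable {R : Type*} [CommSemiring R]

theorem X_zero_pow_mul_X_one_pow (p q : ℕ) :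
    (X 0 : MvPolynomial (Fin 2) R) ^ p * X 1 ^ q =
      monomial (Finsupp.single 0 p + Finsupp.single 1 q) 1 := by
  rw [X_pow_eq_monomial, X_pow_eq_monomial, monomial_mul, one_mul]

theorem X_zero_pow_mul_X_one_pow_mem_span_iff [Nontrivial R] {ι : Type*} (P : ι → Prop)
    (p q : ι → ℕ) (m n : ℕ) :
    (X 0 : MvPolynomial (Fin 2) R) ^ m * X 1 ^ n ∈
        Ideal.span {f | ∃ k, P k ∧ f = X 0 ^ p k * X 1 ^ q k} ↔
      ∃ k, P k ∧ p k ≤ m ∧ q k ≤ n := by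
  have hgen : {f : MvPolynomial (Fin 2) R | ∃ k, P k ∧ f = X 0 ^ p k * X 1 ^ q k} =
      (fun s => monomial s 1) ''
        {s | ∃ k, P k ∧ s = Finsupp.single 0 (p k) + Finsupp.single 1 (q k)} := by
    ext f
    simp only [X_zero_pow_mul_X_one_pow, Set.mem_ofPred_eq, Set.mem_image]
    grind
  classical
  rw [hgen, X_zero_pow_mul_X_one_pow, mem_ideal_span_monomial_image, support_monomial,
    if_neg one_ne_zero]
  simp [Finsupp.single_zero_add_single_one_le_iff]

theorem span_X_zero_pow_mul_X_one_pow_mul_span {ι κ : Type*} (P : ι → Prop) (Q : κ → Prop)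
    (p q : ι → ℕ) (p' q' : κ → ℕ) :
    Ideal.span {f : MvPolynomial (Fin 2) R | ∃ k, P k ∧ f = X 0 ^ p k * X 1 ^ q k} *
        Ideal.span {f | ∃ l, Q l ∧ f = X 0 ^ p' l * X 1 ^ q' l} =
      Ideal.span {f | ∃ kl : ι × κ, (P kl.1 ∧ Q kl.2) ∧
        f = X 0 ^ (p kl.1 + p' kl.2) * X 1 ^ (q kl.1 + q' kl.2)} := by
  rw [Ideal.span_mul_span']
  congr 1
  ext f
  simp only [Set.mem_mul, Set.mem_ofPred_eq, Prod.exists]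
  constructor
  · rintro ⟨_, ⟨k, hk, rfl⟩, _, ⟨l, hl, rfl⟩, rfl⟩
    exact ⟨k, l, ⟨hk, hl⟩, by ring⟩
  · rintro ⟨k, l, ⟨hk, hl⟩, rfl⟩
    exact ⟨_, ⟨k, hk, rfl⟩, _, ⟨l, hl, rfl⟩, by ring⟩

end MvPolynomial

theorem monotoneOn_Iic_of_le_add_one {α : Type*} [Preorder α] {f : ℕ → α} {n : ℕ}
    (hf : ∀ k, k < n → f k ≤ f (k + 1)) : MonotoneOn f (Set.Iic n) :=
  monotoneOn_of_le_add_one Set.ordConnected_Iic fun k _ _ hk => hf k (Set.mem_Iic.mp hk)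

theorem upperClosure_antidiagonal_sums {a a' : ℕ → ℕ} {d e : ℕ}
    (ha : MonotoneOn a (Set.Iic d)) (ha' : MonotoneOn a' (Set.Iic e)) (i : ℕ) :
    (upperClosure {x | ∃ v u, v + u = i ∧ v ≤ d ∧ u ≤ e ∧ x = a v + a' u} : Set ℕ) =
      {j | ∃ v u, (v ≤ d ∧ u ≤ e) ∧ i ≤ v + u ∧ a v + a' u ≤ j} := by
  ext j
  simp only [SetLike.mem_coe, mem_upperClosure, Set.mem_ofPred_eq]
  constructor
  · rintro ⟨_, ⟨v, u, rfl, hv, hu, rfl⟩, hj⟩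
    exact ⟨v, u, ⟨hv, hu⟩, le_rfl, hj⟩
  · rintro ⟨v, u, ⟨hv, hu⟩, hi, hj⟩
    refine ⟨_, ⟨min v i, i - min v i, by omega, by omega, by omega, rfl⟩, ?_⟩
    have hav : a (min v i) ≤ a v := ha (Set.mem_Iic.mpr (by omega)) hv (min_le_left v i)
    have hau : a' (i - min v i) ≤ a' u := ha' (Set.mem_Iic.mpr (by omega)) hu (by omega)
    omega

theorem stmt1_general (K : Type*) [Field K] (d e : ℕ)
    (a a' : ℕ → ℕ)
    (hma : ∀ i, i < d → a i ≤ a (i + 1)) (hma' : ∀ i, i < e → a' i ≤ a' (i + 1))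
    (I J : Ideal (MvPolynomial (Fin 2) K))
    (hI : I = Ideal.span {m : MvPolynomial (Fin 2) K |
      ∃ i ≤ d, m = X 0 ^ (d - i) * X 1 ^ (a i)})
    (hJ : J = Ideal.span {m : MvPolynomial (Fin 2) K |
      ∃ i ≤ e, m = X 0 ^ (e - i) * X 1 ^ (a' i)}) :
    ∀ i ≤ d + e,
      sInf {j : ℕ | (X 0 : MvPolynomial (Fin 2) K) ^ (d + e - i) * X 1 ^ j ∈ I * J} =
      sInf {x : ℕ | ∃ v u, v + u = i ∧ v ≤ d ∧ u ≤ e ∧ x = a v + a' u} := by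
  intro i hi
  have hmem : {j | (X 0 : MvPolynomial (Fin 2) K) ^ (d + e - i) * X 1 ^ j ∈ I * J} =
      {j | ∃ v u, (v ≤ d ∧ u ≤ e) ∧ i ≤ v + u ∧ a v + a' u ≤ j} := by
    rw [hI, hJ, span_X_zero_pow_mul_X_one_pow_mul_span]
    ext j
    rw [Set.mem_ofPred_eq, X_zero_pow_mul_X_one_pow_mem_span_iff, Prod.exists]
    exact exists₂_congr fun v u => and_congr_right fun ⟨hv, hu⟩ => and_congr_left' (by omega)
  rw [hmem, ← upperClosure_antidiagonal_sums (monotoneOn_Iic_of_le_add_one hma)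
    (monotoneOn_Iic_of_le_add_one hma'), Nat.sInf_upperClosure]

/-- The sequence associated to a product of two (x,y)-primary monomial ideals is
the min-convolution of the associated sequences. -/
theorem stmt1 (K : Type*) [Field K] (d e : ℕ)
    (a a' : ℕ → ℕ) (ha0 : a 0 = 0) (ha'0 : a' 0 = 0)
    (hma : ∀ i, i < d → a i ≤ a (i + 1)) (hma' : ∀ i, i < e → a' i ≤ a' (i + 1))
    (I J : Ideal (MvPolynomial (Fin 2) K))
    (hI : I = Ideal.span {m : MvPolynomial (Fin 2) K |
      ∃ i ≤ d, m = X 0 ^ (d - i) * X 1 ^ (a i)})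
    (hJ : J = Ideal.span {m : MvPolynomial (Fin 2) K |
      ∃ i ≤ e, m = X 0 ^ (e - i) * X 1 ^ (a' i)}) :
    ∀ i ≤ d + e,
      sInf {j : ℕ | (X 0 : MvPolynomial (Fin 2) K) ^ (d + e - i) * X 1 ^ j ∈ I * J} =
      sInf {x : ℕ | ∃ v u, v + u = i ∧ v ≤ d ∧ u ≤ e ∧ x = a v + a' u} :=
  stmt1_general K d e a a' hma hma' I J hI hJ
end

section
/- For every d ≥ 1, the number of permutations σ of {1, ..., d} satisfying σ(j) < σ(j+2) for all j = 1, ..., d−2 equals the binomial coefficient C(d, ⌊d/2⌋). -/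
/-!
The condition `σ i < σ (i + 2)` says exactly that `σ` is increasing separately on the odd and on
the even positions, i.e. that `σ` is a shuffle of two increasing sequences of lengths `⌊d/2⌋` and
`⌈d/2⌉`. Such a shuffle is determined by the set of values it takes on the odd positions, and
every subset of size `⌊d/2⌋` arises, so there are `C(d, ⌊d/2⌋)` of them.
-/

open Finset

theorem Fin.strictMono_of_forall_val_eq_add_one {α : Type*} [Preorder α] {k : ℕ}
    {f : Fin k → α} (h : ∀ a b : Fin k, (b : ℕ) = a + 1 → f a < f b) : StrictMono f := by
  cases k with
  | zero => exact fun a => a.elim0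
  | succ k => exact Fin.strictMono_iff_lt_succ.2 fun i => h _ _ (by simp)

section Shuffle

variable {α : Type*} [LinearOrder α] {m n : ℕ}

def IsShuffle (e : Fin m ⊕ Fin n ≃ α) : Prop :=
  StrictMono (e ∘ Sum.inl) ∧ StrictMono (e ∘ Sum.inr)

theorem IsShuffle.ext {e e' : Fin m ⊕ Fin n ≃ α} (he : IsShuffle e) (he' : IsShuffle e')
    (h : Set.range (e ∘ Sum.inl) = Set.range (e' ∘ Sum.inl)) : e = e' := by
  have hinl : e ∘ Sum.inl = e' ∘ Sum.inl := he.1.range_inj he'.1 |>.1 h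
  have hinr : e ∘ Sum.inr = e' ∘ Sum.inr := by
    refine he.2.range_inj he'.2 |>.1 ?_
    rw [Set.range_comp, Set.range_comp, ← Set.compl_range_inl, e.image_compl, e'.image_compl,
      ← Set.range_comp, ← Set.range_comp, h]
  ext (x | x)
  · exact congrFun hinl x
  · exact congrFun hinr x

variable [Fintype α]

theorem card_isShuffle (h : Fintype.card α = m + n) :
    Nat.card {e : Fin m ⊕ Fin n ≃ α // IsShuffle e} = (m + n).choose m := by
  classical
  let leftPart : {e : Fin m ⊕ Fin n ≃ α // IsShuffle e} → {S : Finset α // #S = m} :=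
    fun e => ⟨univ.image (e.1 ∘ Sum.inl), by
      rw [card_image_of_injective _ (e.1.injective.comp Sum.inl_injective), card_univ,
        Fintype.card_fin]⟩
  have hinj : Function.Injective leftPart := fun e e' hee' =>
    Subtype.ext <| e.2.ext e'.2 <| by
      simpa [leftPart, ← coe_inj, Set.image_univ, Function.comp_def] using
        congrArg Subtype.val hee'
  have hsurj : Function.Surjective leftPart := by
    rintro ⟨S, hS⟩
    have hSc : #Sᶜ = n := by rw [card_compl, hS, h, Nat.add_sub_cancel_left]
    refine ⟨⟨finSumEquivOfFinset hS hSc, (S.orderEmbOfFin hS).strictMono,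
      (Sᶜ.orderEmbOfFin hSc).strictMono⟩, Subtype.ext ?_⟩
    simp only [leftPart, ← coe_inj, coe_image, coe_univ, Set.image_univ]
    exact S.range_orderEmbOfFin hS
  rw [Nat.card_congr (Equiv.ofBijective leftPart ⟨hinj, hsurj⟩), Nat.card_eq_fintype_card,
    Fintype.card_finset_len, h]

end Shuffle

-- 0-indexed: `inl` enumerates `1, 3, 5, …`, the positions `2, 4, 6, …` of `{1, …, d}`.
def finOddSumEvenEquiv (d : ℕ) : Fin (d / 2) ⊕ Fin (d - d / 2) ≃ Fin d where
  toFun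
    | .inl m => ⟨2 * m + 1, by omega⟩
    | .inr m => ⟨2 * m, by omega⟩
  invFun i := if h : i.val % 2 = 1 then .inl ⟨i / 2, by omega⟩ else .inr ⟨i / 2, by omega⟩
  left_inv := by
    rintro (m | m)
    · simp only [Nat.mul_add_mod_self_left, Nat.mod_succ, ↓reduceDIte, Sum.inl.injEq,
        Fin.ext_iff]
      omega
    · simp
  right_inv i := by
    dsimp only
    split_ifs <;> ext <;> dsimp only <;> omega

@[simp] theorem finOddSumEvenEquiv_inl (d : ℕ) (m : Fin (d / 2)) :
    (finOddSumEvenEquiv d (.inl m) : ℕ) = 2 * m + 1 := rfl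

@[simp] theorem finOddSumEvenEquiv_inr (d : ℕ) (m : Fin (d - d / 2)) :
    (finOddSumEvenEquiv d (.inr m) : ℕ) = 2 * m := rfl

theorem isShuffle_finOddSumEvenEquiv_trans_iff {α : Type*} [LinearOrder α] {d : ℕ}
    (f : Fin d ≃ α) :
    IsShuffle ((finOddSumEvenEquiv d).trans f) ↔
      ∀ i j : Fin d, (j : ℕ) = (i : ℕ) + 2 → f i < f j := by
  constructor
  · rintro ⟨hodd, heven⟩ i j hij
    obtain ⟨x, rfl⟩ := (finOddSumEvenEquiv d).surjective i
    obtain ⟨y, rfl⟩ := (finOddSumEvenEquiv d).surjective j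
    rcases x with x | x <;> rcases y with y | y <;>
      simp only [finOddSumEvenEquiv_inl, finOddSumEvenEquiv_inr] at hij
    · exact hodd (show x < y by rw [Fin.lt_def]; omega)
    · omega
    · omega
    · exact heven (show x < y by rw [Fin.lt_def]; omega)
  · intro h
    refine ⟨Fin.strictMono_of_forall_val_eq_add_one fun a b hab => h _ _ ?_,
      Fin.strictMono_of_forall_val_eq_add_one fun a b hab => h _ _ ?_⟩ <;>
      simp only [finOddSumEvenEquiv_inl, finOddSumEvenEquiv_inr] <;> omega

theorem stmt8_general (d : ℕ) :
    Nat.card {σ : Equiv.Perm (Fin d) //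
      ∀ i j : Fin d, (j : ℕ) = (i : ℕ) + 2 → σ i < σ j} = d.choose (d / 2) := by
  have hsplit : d / 2 + (d - d / 2) = d := by omega
  rw [Nat.card_congr (((finOddSumEvenEquiv d).symm.equivCongr (Equiv.refl _)).subtypeEquiv
      fun σ => (isShuffle_finOddSumEvenEquiv_trans_iff σ).symm),
    card_isShuffle (by rw [Fintype.card_fin, hsplit]), hsplit]

/-- The number of permutations `σ` of `{1,...,d}` with `σ(j) < σ(j+2)` for all
`j = 1,...,d-2` equals `C(d, ⌊d/2⌋)`. -/
theorem stmt8 (d : ℕ) (hd : 1 ≤ d) :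
    Nat.card {σ : Equiv.Perm (Fin d) //
      ∀ i j : Fin d, (j : ℕ) = (i : ℕ) + 2 → σ i < σ j} = d.choose (d / 2) :=
  stmt8_general d
end

section
/- Let d, e ≥ 1, let a = (a_0, ..., a_d) and a' = (a'_0, ..., a'_e) be sequences of rationals with a_0 = a'_0 = 0, satisfying a_{j+2} − a_{j+1} ≥ a_j − a_{j-1} for all valid j (and similarly for a'). Define c_i = min{ a_v + a'_u : v + u = i, 0 ≤ v ≤ d, 0 ≤ u ≤ e } for i = 0, ..., d+e. Then c also satisfies c_{j+2} − c_{j+1} ≥ c_j − c_{j-1} for all j = 1, ..., d+e−2. -/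
/-!
Pick minimisers `c (j - 1) = a v + a' u` and `c (j + 2) = a p + a' q`. Since `p + q = v + u + 3`,
either `v + 2 ≤ p` or `u + 2 ≤ q`; say the former. Moving two steps from `p` down to `p - 2` and
from `v` up to `v + 2` gives admissible pairs for `c j` and `c (j + 1)`, and the exchange does not
increase the total because the two-step gaps `a (w + 2) - a w` are nondecreasing in `w`.
-/

section

variable {α : Type*} [AddCommGroup α] [PartialOrder α] [IsOrderedAddMonoid α]

lemma twoStepGap_le_of_le {d : ℕ} {a : ℕ → α}
    (ha : ∀ j, 1 ≤ j → j + 2 ≤ d → a j - a (j - 1) ≤ a (j + 2) - a (j + 1))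
    {v w : ℕ} (hvw : v ≤ w) (hw : w + 2 ≤ d) : a (v + 2) - a v ≤ a (w + 2) - a w := by
  induction w, hvw using Nat.le_induction with
  | base => exact le_rfl
  | succ w _ ih =>
    have hstep : a (w + 1) - a w ≤ a (w + 3) - a (w + 2) := ha (w + 1) (by omega) (by omega)
    calc a (v + 2) - a v ≤ a (w + 2) - a w := ih (by omega)
      _ = (a (w + 1) - a w) + (a (w + 2) - a (w + 1)) := (sub_add_sub_cancel' ..).symm
      _ ≤ (a (w + 3) - a (w + 2)) + (a (w + 2) - a (w + 1)) := by gcongr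
      _ = a (w + 1 + 2) - a (w + 1) := sub_add_sub_cancel ..

lemma add_le_add_of_two_le {d e : ℕ} {a b c : ℕ → α}
    (ha : ∀ j, 1 ≤ j → j + 2 ≤ d → a j - a (j - 1) ≤ a (j + 2) - a (j + 1))
    (hc : ∀ v u, v ≤ d → u ≤ e → c (v + u) ≤ a v + b u)
    {v u p q : ℕ} (hvp : v + 2 ≤ p) (hp : p ≤ d) (hu : u ≤ e) (hq : q ≤ e) :
    c (p - 2 + q) + c (v + 2 + u) ≤ (a v + b u) + (a p + b q) := by
  have hgap : a (v + 2) - a v ≤ a (p - 2 + 2) - a (p - 2) :=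
    twoStepGap_le_of_le ha (by omega) (by omega)
  rw [Nat.sub_add_cancel (by omega : 2 ≤ p), sub_le_sub_iff] at hgap
  calc c (p - 2 + q) + c (v + 2 + u)
      ≤ (a (p - 2) + b q) + (a (v + 2) + b u) :=
        add_le_add (hc _ _ (by omega) hq) (hc _ _ (by omega) hu)
    _ = (a (v + 2) + a (p - 2)) + (b u + b q) := by abel
    _ ≤ (a p + a v) + (b u + b q) := by gcongr
    _ = (a v + b u) + (a p + b q) := by abel

end

theorem stmt9_general (d e : ℕ) (a a' c : ℕ → ℚ)
    (ha : ∀ j, 1 ≤ j → j + 2 ≤ d → a j - a (j - 1) ≤ a (j + 2) - a (j + 1))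
    (ha' : ∀ j, 1 ≤ j → j + 2 ≤ e → a' j - a' (j - 1) ≤ a' (j + 2) - a' (j + 1))
    (hc : ∀ i ≤ d + e,
      IsLeast {x : ℚ | ∃ v u, v + u = i ∧ v ≤ d ∧ u ≤ e ∧ x = a v + a' u} (c i)) :
    ∀ j, 1 ≤ j → j + 2 ≤ d + e → c j - c (j - 1) ≤ c (j + 2) - c (j + 1) := by
  intro j hj hje
  have hle : ∀ v u, v ≤ d → u ≤ e → c (v + u) ≤ a v + a' u := fun v u hv hu =>
    (hc _ (by omega)).2 ⟨v, u, rfl, hv, hu, rfl⟩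
  obtain ⟨v, u, hvu, hv, hu, hc₁⟩ := (hc (j - 1) (by omega)).1
  obtain ⟨p, q, hpq, hp, hq, hc₂⟩ := (hc (j + 2) (by omega)).1
  suffices c j + c (j + 1) ≤ c (j - 1) + c (j + 2) by linarith
  rw [hc₁, hc₂]
  rcases le_or_gt (v + 2) p with hvp | hpv
  · have h := add_le_add_of_two_le ha hle hvp hp hu hq
    rwa [show p - 2 + q = j by omega, show v + 2 + u = j + 1 by omega] at h
  · have hle' : ∀ u v, u ≤ e → v ≤ d → c (u + v) ≤ a' u + a v := fun u v hu hv => by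
      rw [add_comm u, add_comm (a' u)]
      exact hle v u hv hu
    have h := add_le_add_of_two_le ha' hle' (by omega : u + 2 ≤ q) hq hv hp
    rw [show q - 2 + p = j by omega, show u + 2 + v = j + 1 by omega] at h
    linarith

/-- The big-cone condition (increasing second differences of gap vectors two apart)
is preserved under min-convolution. -/
theorem stmt9 (d e : ℕ) (hd : 1 ≤ d) (he : 1 ≤ e) (a a' c : ℕ → ℚ)
    (ha0 : a 0 = 0) (ha'0 : a' 0 = 0)
    (ha : ∀ j, 1 ≤ j → j + 2 ≤ d → a j - a (j - 1) ≤ a (j + 2) - a (j + 1))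
    (ha' : ∀ j, 1 ≤ j → j + 2 ≤ e → a' j - a' (j - 1) ≤ a' (j + 2) - a' (j + 1))
    (hc : ∀ i ≤ d + e,
      IsLeast {x : ℚ | ∃ v u, v + u = i ∧ v ≤ d ∧ u ≤ e ∧ x = a v + a' u} (c i)) :
    ∀ j, 1 ≤ j → j + 2 ≤ d + e → c j - c (j - 1) ≤ c (j + 2) - c (j + 1) :=
  stmt9_general d e a a' c ha ha' hc
end

section
/- Let I be a monomial ideal of K[x,y] with associated sequence a = (a_0, ..., a_d) (i.e., a_i = min{ j : x^{d-i} y^j ∈ I }, weakly increasing with a_0 = 0). Then for every k ≥ 0, the K-dimension of R/I^{k+1} equals the sum over i = 0, ..., (k+1)d of min{ a_{j_1} + ... + a_{j_{k+1}} : j_1 + ... + j_{k+1} = i, 0 ≤ j_v ≤ d }. -/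
/-!
Every power of `I` is again generated by monomials: `I ^ n` is spanned by the products
`x ^ (n d - Σ j_v) y ^ (Σ a (j_v))` with `0 ≤ j_v ≤ d`. Since `a` is monotone, lowering some `j_v`
lowers the `y`-exponent, so `x ^ u y ^ w ∈ I ^ n` iff `w ≥ b (n d - u)`, where `b` is the `n`-fold
min-convolution of `a`. The monomials outside a monomial ideal form a `K`-basis of the quotient,
and those below this staircase are `x ^ (n d - i) y ^ w` with `i ≤ n d` and `w < b i`.
-/

open MvPolynomial Finset

namespace MvPolynomial

variable {σ R : Type*}

section CommSemiring

variable [CommSemiring R]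

theorem pow_span_monomial_image {ι : Type*} (g : ι → σ →₀ ℕ) (s : Set ι) (n : ℕ) :
    Ideal.span ((fun i => monomial (g i) (1 : R)) '' s) ^ n =
      Ideal.span ((fun f : Fin n → ι => monomial (∑ v, g (f v)) (1 : R)) ''
        {f | ∀ v, f v ∈ s}) := by
  induction n with
  | zero =>
    rw [pow_zero, Ideal.one_eq_top, eq_comm, Ideal.eq_top_iff_one]
    exact Ideal.subset_span ⟨finZeroElim, finZeroElim, by simp⟩
  | succ n ih =>
    rw [pow_succ', ih, Ideal.span_mul_span']
    congr 1
    ext p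
    simp only [Set.mem_mul, Set.mem_image, Set.mem_ofPred_eq]
    constructor
    · rintro ⟨_, ⟨i, hi, rfl⟩, _, ⟨f, hf, rfl⟩, rfl⟩
      refine ⟨Fin.cons i f, Fin.cases hi hf, ?_⟩
      simp [Fin.sum_univ_succ, monomial_mul]
    · rintro ⟨f, hf, rfl⟩
      exact ⟨_, ⟨f 0, hf 0, rfl⟩, _, ⟨Fin.tail f, fun v => hf v.succ, rfl⟩,
        by simp [Fin.sum_univ_succ, monomial_mul, Fin.tail]⟩

theorem restrictScalars_span_monomial_image (E : Set (σ →₀ ℕ)) :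
    (Ideal.span ((monomial · (1 : R)) '' E)).restrictScalars R =
      restrictSupport R (upperClosure E) := by
  ext p
  simp [mem_ideal_span_monomial_image, mem_restrictSupport_iff, Set.subset_def]

theorem isCompl_restrictSupport (U : Set (σ →₀ ℕ)) :
    IsCompl (restrictSupport R U) (restrictSupport R Uᶜ) := by
  have hli := (basisMonomials σ R).linearIndependent
  have hspan := (basisMonomials σ R).span_eq
  rw [coe_basisMonomials] at hli hspan
  rw [restrictSupport_eq_span, restrictSupport_eq_span]
  refine ⟨hli.disjoint_span_image disjoint_compl_right, codisjoint_iff.mpr ?_⟩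
  rw [← Submodule.span_union, ← Set.image_union, Set.union_compl_self, Set.image_univ, hspan]

end CommSemiring

theorem finrank_quotient_span_monomial_image [Field R] {E : Set (σ →₀ ℕ)}
    {S : Finset (σ →₀ ℕ)} (hS : (S : Set (σ →₀ ℕ)) = (upperClosure E : Set (σ →₀ ℕ))ᶜ) :
    Module.finrank R (MvPolynomial σ R ⧸ Ideal.span ((monomial · (1 : R)) '' E)) = S.card := by
  let e := (Submodule.Quotient.restrictScalarsEquiv R _).symm ≪≫ₗ
    Submodule.quotEquivOfEq _ _ (restrictScalars_span_monomial_image E) ≪≫ₗ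
    Submodule.quotientEquivOfIsCompl _ _ (isCompl_restrictSupport _)
  rw [e.finrank_eq, ← hS, Module.finrank_eq_card_basis (basisRestrictSupport R _)]
  simp

end MvPolynomial

theorem Fin.exists_le_sum_eq_of_le_sum {n : ℕ} (f : Fin n → ℕ) {j : ℕ} (hj : j ≤ ∑ v, f v) :
    ∃ g ≤ f, ∑ v, g v = j := by
  induction n generalizing j with
  | zero => exact ⟨f, le_rfl, (by simpa using hj : j = 0).symm⟩
  | succ n ih =>
    rw [Fin.sum_univ_succ] at hj
    obtain ⟨g, hg, hsum⟩ := ih (Fin.tail f) (j := j - min j (f 0)) (by simp [Fin.tail]; omega)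
    refine ⟨Fin.cons (min j (f 0)) g, fun v => Fin.cases (min_le_right _ _) hg v, ?_⟩
    rw [Fin.sum_cons, hsum]
    omega

/-- The `n`-fold min-convolution of `a` on `[0, d]`. As `sInf ∅ = 0`, it vanishes for
`i > n * d`. -/
noncomputable def minConv (a : ℕ → ℕ) (d n i : ℕ) : ℕ :=
  sInf {x : ℕ | ∃ f : Fin n → ℕ, (∀ v, f v ≤ d) ∧ (∑ v, f v = i) ∧ x = ∑ v, a (f v)}

section minConv

variable {a : ℕ → ℕ} {d n : ℕ}

theorem minConv_le {f : Fin n → ℕ} (hf : ∀ v, f v ≤ d) :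
    minConv a d n (∑ v, f v) ≤ ∑ v, a (f v) :=
  Nat.sInf_le ⟨f, hf, rfl, rfl⟩

theorem minConv_zero_right (ha : a 0 = 0) : minConv a d n 0 = 0 :=
  Nat.eq_zero_of_le_zero <| by simpa [ha] using minConv_le (a := a) (fun _ : Fin n => Nat.zero_le d)

theorem exists_minConv_eq {i : ℕ} (hi : i ≤ n * d) :
    ∃ f : Fin n → ℕ, (∀ v, f v ≤ d) ∧ ∑ v, f v = i ∧ minConv a d n i = ∑ v, a (f v) := by
  unfold minConv
  obtain ⟨f, hf, rfl⟩ := Fin.exists_le_sum_eq_of_le_sum (fun _ : Fin n => d) (by simpa using hi)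
  exact Nat.sInf_mem (⟨_, f, hf, rfl, rfl⟩ : Set.Nonempty {x : ℕ | ∃ g : Fin n → ℕ,
    (∀ v, g v ≤ d) ∧ ∑ v, g v = ∑ v, f v ∧ x = ∑ v, a (g v)})

theorem minConv_le_of_le_sum (ha : MonotoneOn a (Set.Iic d)) {f : Fin n → ℕ}
    (hf : ∀ v, f v ≤ d) {j : ℕ} (hj : j ≤ ∑ v, f v) : minConv a d n j ≤ ∑ v, a (f v) := by
  obtain ⟨g, hg, rfl⟩ := Fin.exists_le_sum_eq_of_le_sum f hj
  calc minConv a d n (∑ v, g v) ≤ ∑ v, a (g v) := minConv_le fun v => (hg v).trans (hf v)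
    _ ≤ ∑ v, a (f v) := sum_le_sum fun v _ =>
        ha (Set.mem_Iic.2 ((hg v).trans (hf v))) (Set.mem_Iic.2 (hf v)) (hg v)

theorem mem_upperClosure_iff_minConv_le (ha : MonotoneOn a (Set.Iic d)) (s : Fin 2 →₀ ℕ) :
    s ∈ upperClosure ((fun f : Fin n → ℕ =>
        ∑ v, (Finsupp.single 0 (d - f v) + Finsupp.single 1 (a (f v)))) '' {f | ∀ v, f v ≤ d}) ↔
      minConv a d n (n * d - s 0) ≤ s 1 := by
  have hsub {f : Fin n → ℕ} (hf : ∀ v, f v ≤ d) : ∑ v, (d - f v) = n * d - ∑ v, f v := by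
    rw [sum_tsub_distrib _ fun v _ => hf v]
    simp
  simp only [mem_upperClosure, Set.mem_image, Set.mem_ofPred_eq, exists_exists_and_eq_and,
    Finsupp.le_def, Fin.forall_fin_two, Finsupp.coe_finsetSum, Finset.sum_apply, Finsupp.coe_add,
    Pi.add_apply, Finsupp.single_apply, Fin.reduceEq, if_true, if_false, add_zero, zero_add]
  constructor
  · rintro ⟨f, hf, h0, h1⟩
    rw [hsub hf] at h0
    exact (minConv_le_of_le_sum ha hf (by omega)).trans h1
  · intro h
    obtain ⟨f, hf, hsum, heq⟩ := exists_minConv_eq (a := a) (Nat.sub_le (n * d) (s 0))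
    exact ⟨f, hf, by rw [hsub hf, hsum]; omega, heq ▸ h⟩

end minConv

noncomputable def belowStaircase (b : ℕ → ℕ) (D : ℕ) : Finset (Fin 2 →₀ ℕ) :=
  ((range (D + 1)).sigma fun i => range (b i)).image
    fun p => Finsupp.single 0 (D - p.1) + Finsupp.single 1 p.2

section belowStaircase

variable (b : ℕ → ℕ) (D : ℕ)

theorem card_belowStaircase : (belowStaircase b D).card = ∑ i ∈ range (D + 1), b i := by
  rw [belowStaircase, card_image_of_injOn, card_sigma]
  · simp
  · rintro ⟨i, v⟩ hiv ⟨j, w⟩ hjw h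
    have h0 := DFunLike.congr_fun h 0
    have h1 := DFunLike.congr_fun h 1
    simp only [mem_coe, mem_sigma, mem_range] at hiv hjw
    simp only [Finsupp.add_apply, Finsupp.single_apply, Fin.reduceEq, if_true, if_false,
      add_zero, zero_add] at h0 h1
    obtain rfl : i = j := by omega
    simp [h1]

theorem coe_belowStaircase (hb : b 0 = 0) :
    (belowStaircase b D : Set (Fin 2 →₀ ℕ)) = {s | b (D - s 0) ≤ s 1}ᶜ := by
  ext s
  simp only [belowStaircase, coe_image, coe_sigma, Set.mem_image, Set.mem_sigma_iff, coe_range,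
    Set.mem_Iio, Sigma.exists, Set.mem_compl_iff, Set.mem_ofPred_eq, not_le]
  constructor
  · rintro ⟨i, v, ⟨hi, hv⟩, rfl⟩
    simp only [Finsupp.add_apply, Finsupp.single_apply, Fin.reduceEq, if_true, if_false,
      add_zero, zero_add]
    rwa [Nat.sub_sub_self (by omega)]
  · intro h
    have hs0 : s 0 ≤ D := by
      by_contra! hD
      rw [Nat.sub_eq_zero_of_le hD.le, hb] at h
      exact Nat.not_lt_zero _ h
    refine ⟨D - s 0, s 1, ⟨by omega, h⟩, ?_⟩
    ext j
    fin_cases j <;> simp [Nat.sub_sub_self hs0]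

end belowStaircase

theorem stmt14_general (K : Type*) [Field K] (d : ℕ) (a : ℕ → ℕ)
    (ha0 : a 0 = 0) (hmono : ∀ i, i < d → a i ≤ a (i + 1))
    (I : Ideal (MvPolynomial (Fin 2) K))
    (hI : I = Ideal.span {m : MvPolynomial (Fin 2) K |
      ∃ i ≤ d, m = X 0 ^ (d - i) * X 1 ^ (a i)}) (k : ℕ) :
    Module.finrank K (MvPolynomial (Fin 2) K ⧸ I ^ (k + 1)) =
      ∑ i ∈ Finset.range ((k + 1) * d + 1),
        sInf {x : ℕ | ∃ f : Fin (k + 1) → ℕ,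
          (∀ v, f v ≤ d) ∧ (∑ v, f v = i) ∧ x = ∑ v, a (f v)} := by
  have ha : MonotoneOn a (Set.Iic d) :=
    monotoneOn_of_le_add_one Set.ordConnected_Iic fun i _ _ hi => hmono i hi
  have hI_monomial : I = Ideal.span ((fun i => monomial
      (Finsupp.single 0 (d - i) + Finsupp.single 1 (a i)) (1 : K)) '' Set.Iic d) := by
    rw [hI]
    congr 1
    ext m
    simp [X_pow_eq_monomial, monomial_mul, eq_comm]
  rw [hI_monomial, pow_span_monomial_image, ← Set.image_image (monomial · (1 : K)),
    finrank_quotient_span_monomial_image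
      (S := belowStaircase (minConv a d (k + 1)) ((k + 1) * d)), card_belowStaircase]
  · rfl
  · rw [coe_belowStaircase _ _ (minConv_zero_right ha0)]
    ext s
    exact (mem_upperClosure_iff_minConv_le ha s).not.symm

/-- For a monomial ideal `I` of `K[x,y]` with associated sequence `a`,
`dim_K R/I^{k+1} = Σ_{i=0}^{(k+1)d} min{ a_{j_1}+...+a_{j_{k+1}} : j_1+...+j_{k+1} = i }`. -/
theorem stmt14 (K : Type*) [Field K] (d : ℕ) (hd : 1 ≤ d) (a : ℕ → ℕ)
    (ha0 : a 0 = 0) (hmono : ∀ i, i < d → a i ≤ a (i + 1))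
    (I : Ideal (MvPolynomial (Fin 2) K))
    (hI : I = Ideal.span {m : MvPolynomial (Fin 2) K |
      ∃ i ≤ d, m = X 0 ^ (d - i) * X 1 ^ (a i)}) (k : ℕ) :
    Module.finrank K (MvPolynomial (Fin 2) K ⧸ I ^ (k + 1)) =
      ∑ i ∈ Finset.range ((k + 1) * d + 1),
        sInf {x : ℕ | ∃ f : Fin (k + 1) → ℕ,
          (∀ v, f v ≤ d) ∧ (∑ v, f v = i) ∧ x = ∑ v, a (f v)} :=
  stmt14_general K d a ha0 hmono I hI k
end

section
/- Let a_0 < a_1 < ... < a_d be integers with a_0 = 0, and suppose that for all i, j with 0 ≤ i ≤ j ≤ d: a_i + a_j ≥ a_0 + a_{i+j} whenever i + j ≤ d, and a_i + a_j ≥ a_d + a_{i+j-d} whenever i + j ≥ d. Let L = (x^{d-i} y^{a_i} : 0 ≤ i ≤ d) ⊆ K[x,y]. Then L² = (x^d, y^{a_d}) · L. -/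
/-!
The product of two generators `x^(d-i) y^(a_i)` and `x^(d-j) y^(a_j)` of `L` is divisible by
`x^d · x^(d-i-j) y^(a_{i+j})` when `i + j ≤ d`, and by `y^(a_d) · x^(2d-i-j) y^(a_{i+j-d})` when
`i + j ≥ d`: the two cone inequalities are exactly the conditions on the `y`-exponents. Hence
`L² ⊆ (x^d, y^(a_d)) L`; the reverse inclusion holds because `x^d` and `y^(a_d)` are the generators
of `L` for `i = 0` and `i = d`.
-/

open MvPolynomial

section LexSegment

variable {R : Type*} [CommRing R] (x y : R) (d : ℕ) (a : ℕ → ℕ)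

def lexSegmentIdeal : Ideal R :=
  Ideal.span {m | ∃ i ≤ d, m = x ^ (d - i) * y ^ a i}

variable {x y d a}

theorem pow_mul_pow_dvd_mul {m n m₁ n₁ m₂ n₂ : ℕ} (hm : m ≤ m₁ + m₂) (hn : n ≤ n₁ + n₂) :
    x ^ m * y ^ n ∣ x ^ m₁ * y ^ n₁ * (x ^ m₂ * y ^ n₂) := by
  rw [mul_mul_mul_comm, ← pow_add, ← pow_add]
  exact mul_dvd_mul (pow_dvd_pow x hm) (pow_dvd_pow y hn)

theorem pow_mul_pow_mem_lexSegmentIdeal {i : ℕ} (hi : i ≤ d) :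
    x ^ (d - i) * y ^ a i ∈ lexSegmentIdeal x y d a :=
  Ideal.subset_span ⟨i, hi, rfl⟩

theorem span_pow_le_lexSegmentIdeal (ha0 : a 0 = 0) :
    Ideal.span {x ^ d, y ^ a d} ≤ lexSegmentIdeal x y d a := by
  rw [Ideal.span_le]
  rintro p (rfl | rfl)
  · simpa [ha0] using pow_mul_pow_mem_lexSegmentIdeal (x := x) (y := y) (a := a) d.zero_le
  · simpa using pow_mul_pow_mem_lexSegmentIdeal (x := x) (y := y) (a := a) le_rfl

theorem mul_mem_span_mul_lexSegmentIdeal_of_add_le {i j : ℕ} (h : i + j ≤ d)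
    (ha : a (i + j) ≤ a i + a j) :
    x ^ (d - i) * y ^ a i * (x ^ (d - j) * y ^ a j) ∈
      Ideal.span {x ^ d, y ^ a d} * lexSegmentIdeal x y d a := by
  refine Ideal.mem_of_dvd _ ?_ (Ideal.mul_mem_mul (Ideal.subset_span (Set.mem_insert _ _))
    (pow_mul_pow_mem_lexSegmentIdeal h))
  rw [← mul_assoc, ← pow_add]
  exact pow_mul_pow_dvd_mul (by omega) ha

theorem mul_mem_span_mul_lexSegmentIdeal_of_le_add {i j : ℕ} (hi : i ≤ d) (hj : j ≤ d)
    (h : d ≤ i + j) (ha : a d + a (i + j - d) ≤ a i + a j) :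
    x ^ (d - i) * y ^ a i * (x ^ (d - j) * y ^ a j) ∈
      Ideal.span {x ^ d, y ^ a d} * lexSegmentIdeal x y d a := by
  refine Ideal.mem_of_dvd _ ?_ (Ideal.mul_mem_mul
    (Ideal.subset_span (Set.mem_insert_of_mem _ rfl))
    (pow_mul_pow_mem_lexSegmentIdeal (show i + j - d ≤ d by omega)))
  rw [mul_left_comm, ← pow_add]
  exact pow_mul_pow_dvd_mul (by omega) ha

theorem lexSegmentIdeal_mul_self (ha0 : a 0 = 0)
    (hineq1 : ∀ i j, i ≤ j → j ≤ d → i + j ≤ d → a 0 + a (i + j) ≤ a i + a j)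
    (hineq2 : ∀ i j, i ≤ j → j ≤ d → d ≤ i + j → a d + a (i + j - d) ≤ a i + a j) :
    lexSegmentIdeal x y d a * lexSegmentIdeal x y d a =
      Ideal.span {x ^ d, y ^ a d} * lexSegmentIdeal x y d a := by
  have ordered : ∀ i j, i ≤ j → j ≤ d → x ^ (d - i) * y ^ a i * (x ^ (d - j) * y ^ a j) ∈
      Ideal.span {x ^ d, y ^ a d} * lexSegmentIdeal x y d a := by
    intro i j hij hj
    rcases le_total (i + j) d with h | h
    · exact mul_mem_span_mul_lexSegmentIdeal_of_add_le h
        (by simpa [ha0] using hineq1 i j hij hj h)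
    · exact mul_mem_span_mul_lexSegmentIdeal_of_le_add (hij.trans hj) hj h (hineq2 i j hij hj h)
  refine le_antisymm ?_ (Ideal.mul_mono_left (span_pow_le_lexSegmentIdeal ha0))
  conv_lhs => rw [lexSegmentIdeal]
  rw [Ideal.span_mul_span', Ideal.span_le]
  rintro _ ⟨_, ⟨i, hi, rfl⟩, _, ⟨j, hj, rfl⟩, rfl⟩
  rcases le_total i j with hij | hji
  · exact ordered i j hij hj
  · simpa only [SetLike.mem_coe, mul_comm (x ^ (d - j) * y ^ a j)] using ordered j i hji hi

end LexSegment

theorem stmt16_general (K : Type*) [Field K] (d : ℕ) (a : ℕ → ℕ) (ha0 : a 0 = 0)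
    (hineq1 : ∀ i j, i ≤ j → j ≤ d → i + j ≤ d → a 0 + a (i + j) ≤ a i + a j)
    (hineq2 : ∀ i j, i ≤ j → j ≤ d → d ≤ i + j → a d + a (i + j - d) ≤ a i + a j)
    (L : Ideal (MvPolynomial (Fin 2) K))
    (hL : L = Ideal.span {m : MvPolynomial (Fin 2) K |
      ∃ i ≤ d, m = X 0 ^ (d - i) * X 1 ^ (a i)}) :
    L * L = Ideal.span {X 0 ^ d, X 1 ^ (a d)} * L := by
  subst hL
  exact lexSegmentIdeal_mul_self ha0 hineq1 hineq2

/-- A lex-segment ideal `L` whose exponent vector lies in the closed revlex cone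
satisfies `L² = (x^d, y^{a_d})·L`. -/
theorem stmt16 (K : Type*) [Field K] (d : ℕ) (hd : 1 ≤ d) (a : ℕ → ℕ) (ha0 : a 0 = 0)
    (hstrict : ∀ i, i < d → a i < a (i + 1))
    (hineq1 : ∀ i j, i ≤ j → j ≤ d → i + j ≤ d → a 0 + a (i + j) ≤ a i + a j)
    (hineq2 : ∀ i j, i ≤ j → j ≤ d → d ≤ i + j → a d + a (i + j - d) ≤ a i + a j)
    (L : Ideal (MvPolynomial (Fin 2) K))
    (hL : L = Ideal.span {m : MvPolynomial (Fin 2) K |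
      ∃ i ≤ d, m = X 0 ^ (d - i) * X 1 ^ (a i)}) :
    L * L = Ideal.span {X 0 ^ d, X 1 ^ (a d)} * L :=
  stmt16_general K d a ha0 hineq1 hineq2 L hL
end
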